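/- Let U ⊆ V ⊆ R^d be ℤ^n-graded submodules, let h_1,…,h_t ∈ V be homogeneous elements whose images h_1+U,…,h_t+U generate V/U, and let S ⊆ ⊕_{i=1}^t Σ^{deg h_i} R be a homogeneous generating set of the syzygy module Syz(H) := ker(ψ : ⊕_{i=1}^t Σ^{deg h_i} R → V/U, e_i ↦ h_i + U). Then {h_1+U,…,h_t+U} is a minimal generating set of V/U if and only if no element of S has a constant module term, i.e., no s = Σ_i s_i e_i ∈ S has a nonzero constant coefficient (coefficient of the monomial 1) in some entry s_i ∈ R. Equivalently, if A is the matrix whose columns are the elements of S, then {h_1+U,…,h_t+U} is minimal if and only if no nonzero constant of k appears as an entry of A. -/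

import Mathlib

noncomputable section

/-- The free module `R^d` over `R = k[X_1, …, X_n]`. -/
abbrev FreeMod (k : Type*) [Field k] (n d : ℕ) := Fin d → MvPolynomial (Fin n) k

variable {k : Type*} [Field k] {n d : ℕ}

/-- The map `R^t → R^d`, `v ↦ ∑ i, v i • h i`. -/
def combMap {t : ℕ} (h : Fin t → FreeMod k n d) :
    FreeMod k n t →ₗ[MvPolynomial (Fin n) k] FreeMod k n d where
  toFun v := ∑ i, v i • h i
  map_add' v w := by simp [add_smul, Finset.sum_add_distrib]
  map_smul' c v := by simp [Finset.smul_sum, smul_smul]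

end

/-
Modulo `U`, a relation `∑ v j • h j ∈ U` whose `i`-th coefficient is a unit expresses `h i` through
the other generators, and conversely; so `{h_j + U}` fails to be minimal exactly when the syzygy
module `span S` contains an element with a unit entry. Units of `k[X]` are the nonzero constants,
so such an element cannot exist if no generator in `S` has a constant term. Conversely, if
`s ∈ S` has a nonzero constant term in entry `i`, homogeneity of `s` forces `s i` to be that
constant, hence a unit.
-/

section

variable {R M ι : Type*} [CommRing R] [AddCommGroup M] [Module R M] [Fintype ι] [DecidableEq ι]

open Submodule in
theorem mem_span_image_compl_iff_exists_ker_isUnit (g : ι → M) (i : ι) :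
    g i ∈ span R (g '' {i}ᶜ) ↔
      ∃ v ∈ LinearMap.ker (Fintype.linearCombination R g), IsUnit (v i) := by
  constructor
  · intro hi
    obtain ⟨l, hl, hlg⟩ := (Finsupp.mem_span_image_iff_linearCombination R).1 hi
    have hli : l i = 0 := (Finsupp.mem_supported' R l).1 hl i (by simp)
    refine ⟨Pi.single i 1 - ⇑l, ?_, by simp [hli]⟩
    rw [LinearMap.mem_ker, map_sub, Fintype.linearCombination_apply_single, one_smul,
      ← Finsupp.linearCombination_eq_fintype_linearCombination_apply]
    simpa [sub_eq_zero] using hlg.symm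
  · rintro ⟨v, hv, hvi⟩
    rw [LinearMap.mem_ker, Fintype.linearCombination_apply,
      Fintype.sum_eq_add_sum_compl i] at hv
    rw [← smul_mem_iff_of_isUnit _ hvi, eq_neg_of_add_eq_zero_left hv]
    exact neg_mem (sum_mem fun j hj =>
      smul_mem _ _ (subset_span ⟨j, by simpa using hj, rfl⟩))

end

namespace MvPolynomial

variable {σ R : Type*} [CommSemiring R] [Nontrivial R]

theorem isUnit_of_support_subsingleton {p : MvPolynomial σ R}
    (hp : (p.support : Set (σ →₀ ℕ)).Subsingleton) (h0 : IsUnit (p.coeff 0)) : IsUnit p := by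
  rw [eq_monomial_of_support_subset_singleton fun m hm => hp hm (mem_support_iff.2 h0.ne_zero),
    ← C_apply]
  exact h0.map C

end MvPolynomial

theorem comap_combMap_eq_ker {k : Type*} [Field k] {n d t : ℕ}
    (U : Submodule (MvPolynomial (Fin n) k) (FreeMod k n d)) (h : Fin t → FreeMod k n d) :
    U.comap (combMap h) =
      LinearMap.ker (Fintype.linearCombination (MvPolynomial (Fin n) k) (U.mkQ ∘ h)) := by
  ext v
  rw [LinearMap.mem_ker, Fintype.linearCombination_apply, Submodule.mem_comap]
  simp_rw [Function.comp_apply, ← map_smul, ← map_sum, Submodule.mkQ_apply,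
    Submodule.Quotient.mk_eq_zero]
  rfl

theorem pruning_minimality_criterion_general {k : Type*} [Field k] {n d t : ℕ}
    (U : Submodule (MvPolynomial (Fin n) k) (FreeMod k n d))
    (h : Fin t → FreeMod k n d)
    (deg : Fin t → (Fin n →₀ ℕ))
    (S : Set (FreeMod k n t))
    (hS : Submodule.span (MvPolynomial (Fin n) k) S = Submodule.comap (combMap h) U)
    (hShom : ∀ s ∈ S, ∃ γ : Fin n →₀ ℕ, ∀ i, ∀ m ∈ (s i).support, m + deg i = γ) :
    (∀ i, U.mkQ (h i) ∉ Submodule.span (MvPolynomial (Fin n) k)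
        {x | ∃ j, j ≠ i ∧ x = U.mkQ (h j)}) ↔
      ∀ s ∈ S, ∀ i, (s i).coeff 0 = 0 := by
  have hmem_span : ∀ i, U.mkQ (h i) ∈ Submodule.span (MvPolynomial (Fin n) k)
      {x | ∃ j, j ≠ i ∧ x = U.mkQ (h j)} ↔
      ∃ v ∈ Submodule.span (MvPolynomial (Fin n) k) S, IsUnit (v i) := fun i => by
    have hset : {x | ∃ j, j ≠ i ∧ x = U.mkQ (h j)} = (U.mkQ ∘ h) '' {i}ᶜ := by
      ext; exact exists_congr fun j => and_congr_right fun _ => eq_comm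
    rw [hset, hS, comap_combMap_eq_ker]
    exact mem_span_image_compl_iff_exists_ker_isUnit _ i
  simp_rw [hmem_span]
  constructor
  · intro hmin s hs i
    by_contra h0
    obtain ⟨γ, hγ⟩ := hShom s hs
    exact hmin i ⟨s, Submodule.subset_span hs, MvPolynomial.isUnit_of_support_subsingleton
      (fun m hm m' hm' => add_right_cancel ((hγ i m hm).trans (hγ i m' hm').symm))
      (isUnit_iff_ne_zero.2 h0)⟩
  · rintro hS0 i ⟨v, hv, hvi⟩
    have hspan : Submodule.span _ S ≤
        Submodule.pi Set.univ fun _ => RingHom.ker MvPolynomial.constantCoeff :=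
      Submodule.span_le.2 fun s hs j _ => hS0 s hs j
    exact (hvi.map MvPolynomial.constantCoeff).ne_zero (hspan hv i trivial)

/-- **Pruning minimality criterion** (relative version).  Let `U ⊆ V ⊆ R^d` be `ℤ^n`-graded
submodules, `h_1, …, h_t ∈ V` homogeneous elements (of degrees `deg i`) whose images
generate `V/U`, and `S` a homogeneous generating set of the syzygy module
`Syz(H) = ker(⊕_i Σ^{deg h_i} R → V/U)`.  Then `{h_1 + U, …, h_t + U}` is a minimal
generating set of `V/U` iff no element of `S` has a nonzero constant coefficient in any
entry. -/
theorem pruning_minimality_criterion {k : Type*} [Field k] {n d t : ℕ}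
    (U V : Submodule (MvPolynomial (Fin n) k) (FreeMod k n d)) (hUV : U ≤ V)
    (hUgr : ∀ f ∈ U, ∀ β : Fin n →₀ ℕ,
      (fun c => MvPolynomial.monomial β ((f c).coeff β)) ∈ U)
    (hVgr : ∀ f ∈ V, ∀ β : Fin n →₀ ℕ,
      (fun c => MvPolynomial.monomial β ((f c).coeff β)) ∈ V)
    (h : Fin t → FreeMod k n d) (hmem : ∀ i, h i ∈ V)
    (deg : Fin t → (Fin n →₀ ℕ))
    (hhom : ∀ i, ∀ c : Fin d, ∀ m ∈ ((h i) c).support, m = deg i)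
    (hgen : Submodule.span (MvPolynomial (Fin n) k)
        (Set.range fun i => U.mkQ (h i)) = V.map U.mkQ)
    (S : Set (FreeMod k n t))
    (hS : Submodule.span (MvPolynomial (Fin n) k) S = Submodule.comap (combMap h) U)
    (hShom : ∀ s ∈ S, ∃ γ : Fin n →₀ ℕ, ∀ i, ∀ m ∈ (s i).support, m + deg i = γ) :
    (∀ i, U.mkQ (h i) ∉ Submodule.span (MvPolynomial (Fin n) k)
        {x | ∃ j, j ≠ i ∧ x = U.mkQ (h j)}) ↔
      ∀ s ∈ S, ∀ i, (s i).coeff 0 = 0 :=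
  pruning_minimality_criterion_general U h deg S hS hShom
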